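/- Let Γ be a locally finite simple graph, F a field and λ ∈ F. Then the following are equivalent: (i) A_{Γ,F} has no eigenfunction corresponding to λ with infinite support; (ii) for every f ∈ F^{V(Γ)} with infinite support, the function A_{Γ,F} f − λ·f also has infinite support; (iii) the set S_{F,λ}(Γ) is finite and, for every vertex v ∉ S_{F,λ}(Γ), every (F,λ)-propagator of Γ with respect to v has finite support. -/

import Mathlib

open Function

/-- The adjacency operator of a locally finite simple graph over a field `F`:
`(adjOp G f) w = ∑_{u ∈ Γ(w)} f u`. -/
def adjOp {V F : Type*} (G : SimpleGraph V) [G.LocallyFinite] [Field F]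
    (f : V → F) (w : V) : F :=
  ∑ u ∈ G.neighborFinset w, f u

/-- An eigenfunction of the adjacency operator corresponding to `l`:
a nonzero `f` with `A f = l • f`. -/
def IsEigenfun {V F : Type*} (G : SimpleGraph V) [G.LocallyFinite] [Field F]
    (l : F) (f : V → F) : Prop :=
  f ≠ 0 ∧ ∀ w, adjOp G f w = l * f w

/-- An `(F, l)`-propagator of `G` with respect to the vertex `v`. -/
def IsPropagator {V F : Type*} [DecidableEq V] (G : SimpleGraph V) [G.LocallyFinite] [Field F]
    (l : F) (v : V) (f : V → F) : Prop :=
  ∀ w, adjOp G f w - l * f w = if w = v then 1 else 0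

/-- The operator `f ↦ A f - l • f`. -/
def adjSub {V F : Type*} (G : SimpleGraph V) [G.LocallyFinite] [Field F]
    (l : F) (f : V → F) : V → F :=
  fun w => adjOp G f w - l * f w

/-!
Write `T = A - λ` (`adjSub`). The pairing `⟨f, k⟩ = ∑ f v * k v` of a function with a finitely
supported one (`Finsupp.linearCombination F f k`) makes `T` adjoint to its restriction `T₀`
(`adjSubFinsupp`) to finitely supported functions, which `T` preserves because `Γ` is locally
finite. Linear duality then identifies the range of `T₀` with the finitely supported functions
orthogonal to `ker T`. Each condition is equivalent to "every element of `ker T` is finitely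
supported": (ii) because if `T f` is finitely supported it is orthogonal to `ker T`, so
`T f = T₀ y` and `f - y ∈ ker T`; (iii) because `v` has a finitely supported propagator iff all
of `ker T` vanishes at `v`, and a kernel of finitely supported functions has finite total
support: otherwise one picks kernel elements with pairwise disjoint supports, and their
pointwise sum, locally finite since `Γ` is, is a kernel element with infinite support.
-/

theorem Finsupp.exists_seq_pairwise_disjoint_support {V M : Type*} [Zero M]
    (P : (V →₀ M) → Prop) (h : ∀ U : Finset V, ∃ x, P x ∧ x ≠ 0 ∧ ∀ u ∈ U, x u = 0) :
    ∃ g : ℕ → V →₀ M, (∀ n, P (g n) ∧ g n ≠ 0) ∧ Pairwise (Disjoint on fun n => (g n).support) := by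
  classical
  choose pick hP hne hvanish using h
  let U : ℕ → Finset V := fun n => Nat.rec ∅ (fun _ U => U ∪ (pick U).support) n
  have hU : Monotone U := monotone_nat_of_le_succ fun n => Finset.subset_union_left
  refine ⟨fun n => pick (U n), fun n => ⟨hP _, hne _⟩, (pairwise_disjoint_on _).2 fun m n hmn => ?_⟩
  refine Finset.disjoint_left.2 fun v hvm hvn => Finsupp.mem_support_iff.1 hvn (hvanish _ v ?_)
  exact hU hmn (Finset.mem_union_right _ hvm)

theorem Submodule.exists_finset_support_subset {V R : Type*} [CommRing R] [IsNoetherianRing R]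
    (K : Submodule R (V →₀ R)) (U : Finset V) (hU : ∀ x ∈ K, (∀ u ∈ U, x u = 0) → x = 0) :
    ∃ s : Finset V, ∀ x ∈ K, x.support ⊆ s := by
  classical
  let restrict : K →ₗ[R] (U → R) := LinearMap.pi fun u => (Finsupp.lapply u.1).comp K.subtype
  have hinj : Injective restrict := by
    rw [injective_iff_map_eq_zero]
    exact fun x hx => Subtype.ext <| hU x x.2 fun u hu => congrFun hx ⟨u, hu⟩
  have : Module.Finite R K := Module.Finite.of_injective restrict hinj
  obtain ⟨t, ht⟩ := Module.Finite.iff_fg.1 this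
  refine ⟨t.biUnion Finsupp.support, fun x hx => ?_⟩
  have hK : K ≤ Finsupp.supported R R (t.biUnion Finsupp.support : Set V) := by
    rw [← ht, Submodule.span_le]
    intro b hb
    rw [SetLike.mem_coe, Finsupp.mem_supported]
    exact Finset.coe_subset.2 (Finset.subset_biUnion_of_mem _ hb)
  exact Finset.coe_subset.1 ((Finsupp.mem_supported _ _).1 (hK hx))

theorem Finsupp.linearCombination_coe_comm {V R : Type*} [CommSemiring R] (a b : V →₀ R) :
    Finsupp.linearCombination R a b = Finsupp.linearCombination R b a := by
  classical
  rw [Finsupp.linearCombination_apply, Finsupp.linearCombination_apply,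
    Finsupp.sum_of_support_subset b Finset.subset_union_right _ fun _ _ => zero_smul R (a _),
    Finsupp.sum_of_support_subset a Finset.subset_union_left _ fun _ _ => zero_smul R (b _)]
  exact Finset.sum_congr rfl fun v _ => mul_comm _ _

section

variable {V F : Type*} (G : SimpleGraph V) [G.LocallyFinite] [Field F] (l : F)

theorem adjSub_apply (f : V → F) (w : V) :
    adjSub G l f w = ∑ u ∈ G.neighborFinset w, f u - l * f w := rfl

def adjSubₗ : (V → F) →ₗ[F] (V → F) where
  toFun := adjSub G l
  map_add' f g := by
    ext w
    simp only [adjSub_apply, Pi.add_apply, Finset.sum_add_distrib]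
    ring
  map_smul' c f := by
    ext w
    simp only [adjSub_apply, Pi.smul_apply, smul_eq_mul, RingHom.id_apply, ← Finset.mul_sum]
    ring

theorem adjSubₗ_apply (f : V → F) : adjSubₗ G l f = adjSub G l f := rfl

theorem isEigenfun_iff {f : V → F} : IsEigenfun G l f ↔ f ≠ 0 ∧ adjSub G l f = 0 := by
  simp only [IsEigenfun, funext_iff, adjSub, Pi.zero_apply, sub_eq_zero]

theorem isPropagator_iff [DecidableEq V] {v : V} {f : V → F} :
    IsPropagator G l v f ↔ adjSub G l f = Pi.single v 1 := by
  simp only [IsPropagator, funext_iff, adjSub, Pi.single_apply]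

theorem adjSub_finsum {ι : Type*} (g : ι → V → F) (hg : ∀ v, (support fun i => g i v).Finite)
    (w : V) : adjSub G l (fun v => ∑ᶠ i, g i v) w = ∑ᶠ i, adjSub G l (g i) w := by
  have hsum : (support fun i => ∑ u ∈ G.neighborFinset w, g i u).Finite :=
    (Set.Finite.biUnion (Finset.finite_toSet _) fun u _ => hg u).subset
      (Finset.support_sum _ fun u i => g i u)
  simp only [adjSub_apply]
  rw [finsum_sub_distrib hsum ((hg w).subset (support_mul_subset_right _ _)),
    ← sum_finsum_comm _ _ fun u _ => hg u, mul_finsum]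

noncomputable def adjSubFinsupp : (V →₀ F) →ₗ[F] (V →₀ F) :=
  Finsupp.linearCombination F fun v =>
    ∑ u ∈ G.neighborFinset v, Finsupp.single u 1 - l • Finsupp.single v 1

theorem coe_adjSubFinsupp (k : V →₀ F) : ⇑(adjSubFinsupp G l k) = adjSub G l k := by
  classical
  suffices Finsupp.lcoeFun ∘ₗ adjSubFinsupp G l = adjSubₗ G l ∘ₗ Finsupp.lcoeFun from
    congrArg (· k) this
  refine Finsupp.lhom_ext fun v c => funext fun w => ?_
  simp only [adjSubFinsupp, Finsupp.smul_single, smul_eq_mul, mul_one, LinearMap.coe_comp,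
    comp_apply, Finsupp.linearCombination_single, map_smul, Finsupp.lcoeFun_apply,
    Finsupp.coe_sub, Finsupp.coe_finsetSum, Pi.smul_apply, Pi.sub_apply, Finset.sum_apply,
    Finsupp.single_apply, Finset.sum_ite_eq', SimpleGraph.mem_neighborFinset, adjSubₗ_apply,
    adjSub_apply, Finset.sum_ite_eq, G.adj_comm, mul_ite, mul_zero]
  split_ifs <;> ring

theorem adjSubFinsupp_eq_iff (k g : V →₀ F) : adjSubFinsupp G l k = g ↔ adjSub G l k = g := by
  rw [← coe_adjSubFinsupp, DFunLike.coe_fn_eq]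

theorem linearCombination_adjSub (f : V → F) (k : V →₀ F) :
    Finsupp.linearCombination F (adjSub G l f) k =
      Finsupp.linearCombination F f (adjSubFinsupp G l k) := by
  suffices Finsupp.linearCombination F (adjSub G l f) =
      Finsupp.linearCombination F f ∘ₗ adjSubFinsupp G l from congrArg (· k) this
  refine Finsupp.lhom_ext fun v c => ?_
  simp [adjSubFinsupp, adjSub_apply, Finsupp.linearCombination_single, map_sum]

theorem mem_range_adjSubFinsupp_iff (g : V →₀ F) :
    g ∈ LinearMap.range (adjSubFinsupp G l) ↔
      ∀ x, adjSub G l x = 0 → Finsupp.linearCombination F x g = 0 := by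
  constructor
  · rintro ⟨k, rfl⟩ x hx
    rw [← linearCombination_adjSub, hx, Finsupp.linearCombination_zero, LinearMap.zero_apply]
  · intro h
    rw [← Subspace.forall_mem_dualAnnihilator_apply_eq_zero_iff]
    intro φ hφ
    rw [Submodule.mem_dualAnnihilator] at hφ
    set x : V → F := fun v => φ (Finsupp.single v 1)
    have hφx : φ = Finsupp.linearCombination F x := Finsupp.lhom_ext fun v c => by
      rw [Finsupp.linearCombination_single, ← map_smul, Finsupp.smul_single_one]
    have hx : adjSub G l x = 0 := funext fun w => calc
      adjSub G l x w = Finsupp.linearCombination F (adjSub G l x) (Finsupp.single w 1) := by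
        rw [Finsupp.linearCombination_single, one_smul]
      _ = φ (adjSubFinsupp G l (Finsupp.single w 1)) := by rw [linearCombination_adjSub, hφx]
      _ = 0 := hφ _ (LinearMap.mem_range_self _ _)
    rw [hφx]
    exact h x hx

theorem exists_isPropagator_finsupp_iff [DecidableEq V] (v : V) :
    (∃ p : V →₀ F, IsPropagator G l v p) ↔ ∀ x, adjSub G l x = 0 → x v = 0 := by
  simp only [isPropagator_iff, ← Finsupp.single_eq_pi_single, ← adjSubFinsupp_eq_iff]
  simpa using mem_range_adjSubFinsupp_iff G l (Finsupp.single v 1)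

theorem exists_adjSub_eq_zero_infinite_support
    (h : ∀ U : Finset V, ∃ x : V →₀ F, adjSub G l x = 0 ∧ x ≠ 0 ∧ ∀ u ∈ U, x u = 0) :
    ∃ x : V → F, adjSub G l x = 0 ∧ (support x).Infinite := by
  obtain ⟨g, hg, hdisj⟩ := Finsupp.exists_seq_pairwise_disjoint_support _ h
  have hunique : ∀ m n v, g m v ≠ 0 → g n v ≠ 0 → m = n := fun m n v hm hn => by
    by_contra hmn
    exact Finset.disjoint_left.1 (hdisj hmn) (Finsupp.mem_support_iff.2 hm)
      (Finsupp.mem_support_iff.2 hn)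
  let x : V → F := fun v => ∑ᶠ n, g n v
  have hx : ∀ n v, g n v ≠ 0 → x v = g n v := fun n v hn =>
    finsum_eq_single _ n fun m hmn => by_contra fun hm => hmn (hunique m n v hm hn)
  refine ⟨x, funext fun w => ?_, ?_⟩
  · have hloc : ∀ v, (support fun n => g n v).Finite := fun v =>
      Set.Subsingleton.finite fun m hm n hn => hunique m n v hm hn
    simp only [x, adjSub_finsum G l _ hloc, (hg _).1, Pi.zero_apply, finsum_zero]
  · have hne : ∀ n, ∃ v, g n v ≠ 0 := fun n => by
      simpa [DFunLike.ext_iff] using (hg n).2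
    choose v hv using hne
    refine Set.infinite_of_injective_forall_mem (f := v) (fun m n hmn => ?_) fun n => ?_
    · exact hunique m n (v n) (hmn ▸ hv m) (hv n)
    · rw [mem_support, hx n _ (hv n)]
      exact hv n

theorem exists_finset_support_subset_of_adjSub_eq_zero
    (hker : ∀ x : V → F, adjSub G l x = 0 → (support x).Finite) :
    ∃ s : Finset V, ∀ x : V → F, adjSub G l x = 0 → support x ⊆ s := by
  classical
  by_cases hU : ∃ U : Finset V,
      ∀ x ∈ LinearMap.ker (adjSubFinsupp G l), (∀ u ∈ U, x u = 0) → x = 0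
  · obtain ⟨U, hU⟩ := hU
    obtain ⟨s, hs⟩ := (LinearMap.ker (adjSubFinsupp G l)).exists_finset_support_subset U hU
    refine ⟨s, fun x hx => ?_⟩
    let x₀ := Finsupp.ofSupportFinite x (hker x hx)
    have hx₀ : x₀ ∈ LinearMap.ker (adjSubFinsupp G l) := (adjSubFinsupp_eq_iff G l _ _).2 hx
    exact (Finsupp.fun_support_eq x₀).trans_subset (Finset.coe_subset.2 (hs x₀ hx₀))
  · push Not at hU
    obtain ⟨x, hx, hinf⟩ := exists_adjSub_eq_zero_infinite_support G l fun U => by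
      obtain ⟨x, hx, hxU, hx0⟩ := hU U
      exact ⟨x, (adjSubFinsupp_eq_iff G l _ _).1 hx, hx0, hxU⟩
    exact absurd (hker x hx) hinf

theorem finite_support_of_finite_support_adjSub
    (hker : ∀ x : V → F, adjSub G l x = 0 → (support x).Finite) {f : V → F}
    (hf : (support (adjSub G l f)).Finite) : (support f).Finite := by
  let g := Finsupp.ofSupportFinite _ hf
  have hg : g ∈ LinearMap.range (adjSubFinsupp G l) := by
    refine (mem_range_adjSubFinsupp_iff G l g).2 fun x hx => ?_
    let x₀ := Finsupp.ofSupportFinite x (hker x hx)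
    calc Finsupp.linearCombination F x g = Finsupp.linearCombination F (adjSub G l f) x₀ :=
          Finsupp.linearCombination_coe_comm x₀ g
      _ = 0 := by
          rw [linearCombination_adjSub, (adjSubFinsupp_eq_iff G l x₀ 0).2 hx, map_zero]
  obtain ⟨y, hy⟩ := hg
  have hfy : adjSub G l (f - y) = 0 := by
    rw [← adjSubₗ_apply, map_sub, adjSubₗ_apply, adjSubₗ_apply, ← coe_adjSubFinsupp, hy]
    exact sub_self _
  have hsupp := support_add (f - ⇑y) ⇑y
  simp only [Pi.sub_apply, sub_add_cancel] at hsupp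
  exact ((hker _ hfy).union y.hasFiniteSupport).subset hsupp

theorem finite_setOf_not_exists_isPropagator [DecidableEq V]
    (hker : ∀ x : V → F, adjSub G l x = 0 → (support x).Finite) :
    {v : V | ¬ ∃ f : V → F, IsPropagator G l v f}.Finite := by
  obtain ⟨s, hs⟩ := exists_finset_support_subset_of_adjSub_eq_zero G l hker
  refine s.finite_toSet.subset fun v hv => ?_
  by_contra hvs
  obtain ⟨p, hp⟩ := (exists_isPropagator_finsupp_iff G l v).2 fun x hx =>
    notMem_support.1 fun hv' => hvs (hs x hx hv')
  exact hv ⟨p, hp⟩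

theorem finite_support_of_isPropagator [DecidableEq V]
    (hker : ∀ x : V → F, adjSub G l x = 0 → (support x).Finite) {v : V} {p : V → F}
    (hp : IsPropagator G l v p) : (support p).Finite := by
  refine finite_support_of_finite_support_adjSub G l hker ?_
  rw [(isPropagator_iff G l).1 hp]
  exact (Set.finite_singleton v).subset Pi.support_single_subset

theorem not_exists_isEigenfun_infinite_support_iff :
    (¬ ∃ f : V → F, IsEigenfun G l f ∧ (support f).Infinite) ↔
      ∀ x : V → F, adjSub G l x = 0 → (support x).Finite := by
  simp only [isEigenfun_iff]
  constructor
  · intro h x hx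
    by_contra hinf
    refine h ⟨x, ⟨?_, hx⟩, hinf⟩
    rintro rfl
    exact hinf (by simp)
  · rintro h ⟨f, ⟨-, hf⟩, hinf⟩
    exact hinf (h f hf)

end

theorem stmt9 {V F : Type*} [DecidableEq V] (G : SimpleGraph V) [G.LocallyFinite] [Field F]
    (l : F) :
    [ ¬ ∃ f : V → F, IsEigenfun G l f ∧ (support f).Infinite,
      ∀ f : V → F, (support f).Infinite → (support (adjSub G l f)).Infinite,
      {v : V | ¬ ∃ f : V → F, IsPropagator G l v f}.Finite ∧
        ∀ v : V, (∃ f : V → F, IsPropagator G l v f) →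
          ∀ f : V → F, IsPropagator G l v f → (support f).Finite ].TFAE := by
  rw [not_exists_isEigenfun_infinite_support_iff]
  tfae_have 1 → 2 := fun hker f hf hfin =>
    hf (finite_support_of_finite_support_adjSub G l hker hfin)
  tfae_have 2 → 1 := fun h x hx => by
    by_contra hinf
    simpa [hx] using h x hinf
  tfae_have 1 → 3 := fun hker => ⟨finite_setOf_not_exists_isPropagator G l hker,
    fun _ _ _ hp => finite_support_of_isPropagator G l hker hp⟩
  tfae_have 3 → 1 := by
    rintro ⟨hS, hprop⟩ f hf
    by_contra hinf
    obtain ⟨v, hfv, hvS⟩ := (Set.Infinite.sdiff hinf hS).nonempty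
    obtain ⟨p, hp⟩ := not_not.1 hvS
    have hp₀ : IsPropagator G l v (Finsupp.ofSupportFinite p (hprop v ⟨p, hp⟩ p hp)) := hp
    exact hfv ((exists_isPropagator_finsupp_iff G l v).1 ⟨_, hp₀⟩ f hf)
  tfae_finish
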